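/- arXiv:math/0307249 — 3 statements merged into one kernel-verified Lean document; each statement's English description precedes it below -/
import Mathlib

section
/- Let s > 0, S > 0 and 0 ≤ y < s be real numbers, and let ℒ = {k·(S/s, y) + n·(0, s) : k, n ∈ ℤ} ⊆ ℝ². Let H = {(y₁, y₂) ∈ ℝ² : y₂ > 0, or (y₂ = 0 and y₁ > 0)}. Then for every T > 0 the set {v ∈ ℒ ∩ H : ‖v‖ ≤ T} is finite and its cardinality is at most πT²/(2S) + 2sT/S + T/s. -/
/-!
Slice the lattice into the vertical lines `x = k S / s`, `k ∈ ℤ`, on each of which the lattice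
points are spaced by `s`. For `k ≠ 0` the half-disc meets the line in a segment of length
`√(T² - (k S / s)²)`, holding at most `√(T² - (k S / s)²) / s + 1` lattice points; for `k = 0`
it meets it in `(0, T]`, holding at most `T / s`. Only the lines with `|k| S / s ≤ T` meet the
disc, so the `+ 1`s add up to at most `2 s T / S`, and the square roots, grouped in pairs `± k`,
form a lower Riemann sum with step `S / s` for the quarter-disc area `π T² / 4`, so they add up
to at most `π T² / (2 S)`.
-/

open Finset Real

lemma integral_sqrt_sq_sub_sq {r : ℝ} (hr : 0 ≤ r) :
    ∫ x in (0 : ℝ)..r, √(r ^ 2 - x ^ 2) = π * r ^ 2 / 4 := by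
  have quarter : ∫ x in (0 : ℝ)..1, √(1 - x ^ 2) = π / 4 := by
    have even := intervalIntegral.integral_comp_neg (a := (0 : ℝ)) (b := 1)
      fun x => √(1 - x ^ 2)
    simp only [neg_sq, neg_zero] at even
    have hcont : Continuous fun x : ℝ => √(1 - x ^ 2) := by fun_prop
    linarith [integral_sqrt_one_sub_sq, intervalIntegral.integral_add_adjacent_intervals
      (hcont.intervalIntegrable (μ := MeasureTheory.volume) (-1) 0)
      (hcont.intervalIntegrable 0 1)]
  rcases hr.eq_or_lt with rfl | hr
  · simp
  have scale (x : ℝ) : √(r ^ 2 - (r * x) ^ 2) = r * √(1 - x ^ 2) := by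
    rw [← sqrt_sq hr.le, ← sqrt_mul (sq_nonneg r), sqrt_sq hr.le]
    ring_nf
  have := intervalIntegral.integral_comp_mul_left (a := 0) (b := 1)
    (fun x => √(r ^ 2 - x ^ 2)) hr.ne'
  simp only [scale, intervalIntegral.integral_const_mul, quarter, mul_zero, mul_one,
    smul_eq_mul] at this
  rw [← mul_inv_cancel_left₀ hr.ne' (∫ x in (0 : ℝ)..r, √(r ^ 2 - x ^ 2)), ← this]
  ring

lemma sum_sqrt_sq_sub_sq_le {T δ : ℝ} (hδ : 0 < δ) {K : ℕ} (hK : K * δ ≤ T) :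
    ∑ i ∈ range K, √(T ^ 2 - ((i + 1) * δ) ^ 2) ≤ π * T ^ 2 / (4 * δ) := by
  have hT : 0 ≤ T := le_trans (by positivity) hK
  set f : ℝ → ℝ := fun t => √(T ^ 2 - (δ * t) ^ 2)
  have hf : Continuous f := by fun_prop
  have hanti : AntitoneOn f (Set.Icc 0 (0 + K)) := fun a ha b _ hab =>
    sqrt_le_sqrt (by have := ha.1; gcongr)
  calc ∑ i ∈ range K, √(T ^ 2 - ((i + 1) * δ) ^ 2)
      = ∑ i ∈ range K, f (0 + ↑(i + 1)) := by simp [f, mul_comm]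
    _ ≤ ∫ t in (0 : ℝ)..0 + K, f t := hanti.sum_le_integral
    _ ≤ ∫ t in (0 : ℝ)..T / δ, f t :=
        intervalIntegral.integral_mono_interval le_rfl (by positivity)
          (by rw [zero_add, le_div_iff₀ hδ]; exact hK)
          (Filter.Eventually.of_forall fun _ => sqrt_nonneg _) (hf.intervalIntegrable _ _)
    _ = π * T ^ 2 / (4 * δ) := by
        rw [intervalIntegral.integral_comp_mul_left (fun x => √(T ^ 2 - x ^ 2)) hδ.ne',
          mul_zero, mul_div_cancel₀ _ hδ.ne', integral_sqrt_sq_sub_sq hT, smul_eq_mul]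
        field_simp

lemma sum_Icc_neg_natCast_self {M : Type*} [AddCommMonoid M] (f : ℤ → M) (K : ℕ) :
    ∑ k ∈ Icc (-(K : ℤ)) K, f k = f 0 + ∑ i ∈ range K, (f (i + 1) + f (-(i + 1))) := by
  induction K with
  | zero => simp
  | succ K ih =>
    have hIcc : Icc (-((K + 1 : ℕ) : ℤ)) (K + 1 : ℕ) =
        insert ((K : ℤ) + 1) (insert (-((K : ℤ) + 1)) (Icc (-(K : ℤ)) K)) := by
      ext k; simp only [mem_insert, mem_Icc]; push_cast; omega
    rw [hIcc, sum_insert (by simp; omega), sum_insert (by simp), ih, sum_range_succ]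
    abel

lemma card_Icc_ceil_floor_le {x y : ℝ} (h : x ≤ y + 1) : (#(Icc ⌈x⌉ ⌊y⌋) : ℝ) ≤ y - x + 1 := by
  rcases le_or_gt ⌈x⌉ (⌊y⌋ + 1) with hle | hlt
  · have hcard : (#(Icc ⌈x⌉ ⌊y⌋) : ℝ) = ⌊y⌋ + 1 - ⌈x⌉ := by
      exact_mod_cast Int.card_Icc_of_le _ _ hle
    linarith [Int.floor_le y, Int.le_ceil x]
  · rw [Icc_eq_empty (by omega), card_empty, Nat.cast_zero]
    linarith

/-- The `n` for which `k • (δ, y) + n • (0, s)` can lie in the half-plane and in the closed disc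
of radius `T`: for `k = 0` the half-plane forces `n > 0`. -/
noncomputable def columnIndices (s y δ T : ℝ) (k : ℤ) : Finset ℤ :=
  if k = 0 then Ioc 0 ⌊T / s⌋ else Icc ⌈-(k * y) / s⌉ ⌊(√(T ^ 2 - (k * δ) ^ 2) - k * y) / s⌋

section columnIndices

variable {s y δ T : ℝ}

lemma card_columnIndices_zero_le (hs : 0 ≤ s) (hT : 0 ≤ T) :
    (#(columnIndices s y δ T 0) : ℝ) ≤ T / s := by
  rw [columnIndices, if_pos rfl, Int.card_Ioc, sub_zero, Int.floor_toNat]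
  exact Nat.floor_le (by positivity)

lemma card_columnIndices_le (hs : 0 < s) {k : ℤ} (hk : k ≠ 0) :
    (#(columnIndices s y δ T k) : ℝ) ≤ √(T ^ 2 - (k * δ) ^ 2) / s + 1 := by
  rw [columnIndices, if_neg hk]
  have hR := div_nonneg (sqrt_nonneg (T ^ 2 - (k * δ) ^ 2)) hs.le
  refine (card_Icc_ceil_floor_le ?_).trans_eq ?_
  · rw [sub_div, neg_div]; linarith
  · ring

lemma mem_columnIndices (hs : 0 < s) (hT : 0 ≤ T) {k n : ℤ}
    (hH : 0 < k * y + n * s ∨ (k * y + n * s = 0 ∧ 0 < k * δ))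
    (hnorm : (k * δ) ^ 2 + (k * y + n * s) ^ 2 ≤ T ^ 2) : n ∈ columnIndices s y δ T k := by
  unfold columnIndices
  split_ifs with hk
  · subst hk
    simp only [Int.cast_zero, zero_mul, zero_add, lt_irrefl, and_false, or_false] at hH hnorm
    rw [mem_Ioc, Int.le_floor, le_div_iff₀ hs]
    refine ⟨by exact_mod_cast pos_of_mul_pos_left hH hs.le, ?_⟩
    exact (le_abs_self _).trans (abs_le_of_sq_le_sq (by simpa using hnorm) hT)
  · have h0 : 0 ≤ k * y + n * s := hH.elim le_of_lt fun h => h.1.ge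
    have hR : k * y + n * s ≤ √(T ^ 2 - (k * δ) ^ 2) := le_sqrt_of_sq_le (by linarith)
    rw [mem_Icc, Int.ceil_le, Int.le_floor, div_le_iff₀ hs, le_div_iff₀ hs]
    constructor <;> linarith

lemma mem_Icc_floor_of_sq_le (hδ : 0 < δ) (hT : 0 ≤ T) {k : ℤ} (h : (k * δ) ^ 2 ≤ T ^ 2) :
    k ∈ Icc (-(⌊T / δ⌋₊ : ℤ)) ⌊T / δ⌋₊ := by
  have hk : (k.natAbs : ℝ) ≤ T / δ := by
    rw [Nat.cast_natAbs, Int.cast_abs, le_div_iff₀ hδ, ← abs_of_pos hδ, ← abs_mul]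
    exact abs_le_of_sq_le_sq h hT
  have hK := Nat.le_floor hk
  rw [mem_Icc]
  omega

lemma sum_card_columnIndices_le (hs : 0 < s) (hδ : 0 < δ) (hT : 0 ≤ T) :
    ∑ k ∈ Icc (-(⌊T / δ⌋₊ : ℤ)) ⌊T / δ⌋₊, (#(columnIndices s y δ T k) : ℝ)
      ≤ T / s + 2 * (T / δ) + π * T ^ 2 / (2 * δ * s) := by
  set K := ⌊T / δ⌋₊
  have hK : (K : ℝ) ≤ T / δ := Nat.floor_le (by positivity)
  have hpair : ∀ i ∈ range K, (#(columnIndices s y δ T (i + 1)) : ℝ)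
      + #(columnIndices s y δ T (-(i + 1))) ≤ 2 * (√(T ^ 2 - ((i + 1) * δ) ^ 2) / s + 1) := by
    intro i _
    have hpos := card_columnIndices_le (y := y) (δ := δ) (T := T) hs (k := i + 1) (by omega)
    have hneg := card_columnIndices_le (y := y) (δ := δ) (T := T) hs (k := -(i + 1)) (by omega)
    push_cast at hpos hneg
    rw [neg_mul, neg_sq] at hneg
    linarith
  have hsum := sum_sqrt_sq_sub_sq_le hδ ((le_div_iff₀ hδ).1 hK)
  rw [sum_Icc_neg_natCast_self]
  calc _ ≤ T / s + ∑ i ∈ range K, 2 * (√(T ^ 2 - ((i + 1) * δ) ^ 2) / s + 1) :=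
        add_le_add (card_columnIndices_zero_le hs.le hT) (sum_le_sum hpair)
    _ = T / s + 2 * K + 2 / s * ∑ i ∈ range K, √(T ^ 2 - ((i + 1) * δ) ^ 2) := by
        simp only [mul_add, sum_add_distrib, ← mul_sum, ← sum_div, sum_const, card_range,
          nsmul_eq_mul, mul_one]
        ring
    _ ≤ T / s + 2 * (T / δ) + 2 / s * (π * T ^ 2 / (4 * δ)) := by gcongr
    _ = T / s + 2 * (T / δ) + π * T ^ 2 / (2 * δ * s) := by field_simp; ring

noncomputable def latticeIndices (s y δ T : ℝ) : Finset (ℤ × ℤ) :=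
  (Icc (-(⌊T / δ⌋₊ : ℤ)) ⌊T / δ⌋₊).biUnion fun k => (columnIndices s y δ T k).image (Prod.mk k)

lemma mem_latticeIndices (hs : 0 < s) (hδ : 0 < δ) (hT : 0 ≤ T) {k n : ℤ}
    (hH : 0 < k * y + n * s ∨ (k * y + n * s = 0 ∧ 0 < k * δ))
    (hnorm : (k * δ) ^ 2 + (k * y + n * s) ^ 2 ≤ T ^ 2) : (k, n) ∈ latticeIndices s y δ T :=
  mem_biUnion.2 ⟨k, mem_Icc_floor_of_sq_le hδ hT (by nlinarith),
    mem_image_of_mem _ (mem_columnIndices hs hT hH hnorm)⟩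

lemma card_latticeIndices_le (hs : 0 < s) (hδ : 0 < δ) (hT : 0 ≤ T) :
    (#(latticeIndices s y δ T) : ℝ) ≤ T / s + 2 * (T / δ) + π * T ^ 2 / (2 * δ * s) :=
  calc (#(latticeIndices s y δ T) : ℝ)
      ≤ ∑ k ∈ Icc (-(⌊T / δ⌋₊ : ℤ)) ⌊T / δ⌋₊, (#(columnIndices s y δ T k) : ℝ) := by
        exact_mod_cast card_biUnion_le.trans (sum_le_sum fun _ _ => card_image_le)
    _ ≤ _ := sum_card_columnIndices_le hs hδ hT

end columnIndices

theorem lattice_halfplane_count_general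
    (s S y : ℝ) (hs : 0 < s) (hS : 0 < S)
    (u₁ u₂ : EuclideanSpace ℝ (Fin 2))
    (hu₁ : u₁ = (WithLp.equiv 2 (Fin 2 → ℝ)).symm ![S / s, y])
    (hu₂ : u₂ = (WithLp.equiv 2 (Fin 2 → ℝ)).symm ![0, s])
    (T : ℝ) (hT : 0 < T) :
    {v : EuclideanSpace ℝ (Fin 2) |
        (∃ k n : ℤ, v = k • u₁ + n • u₂) ∧
        (0 < v 1 ∨ (v 1 = 0 ∧ 0 < v 0)) ∧ ‖v‖ ≤ T}.Finite ∧
    ({v : EuclideanSpace ℝ (Fin 2) |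
        (∃ k n : ℤ, v = k • u₁ + n • u₂) ∧
        (0 < v 1 ∨ (v 1 = 0 ∧ 0 < v 0)) ∧ ‖v‖ ≤ T}.ncard : ℝ)
      ≤ Real.pi * T ^ 2 / (2 * S) + 2 * s * T / S + T / s := by
  set δ := S / s
  have hδ : 0 < δ := div_pos hS hs
  set A := {v : EuclideanSpace ℝ (Fin 2) | (∃ k n : ℤ, v = k • u₁ + n • u₂) ∧
    (0 < v 1 ∨ (v 1 = 0 ∧ 0 < v 0)) ∧ ‖v‖ ≤ T}
  set L : ℤ × ℤ → EuclideanSpace ℝ (Fin 2) := fun p => p.1 • u₁ + p.2 • u₂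
  have hsub : A ⊆ L '' latticeIndices s y δ T := by
    rintro _ ⟨⟨k, n, rfl⟩, hH, hv⟩
    have h₀ : (k • u₁ + n • u₂) 0 = k * δ := by simp [hu₁, hu₂]
    have h₁ : (k • u₁ + n • u₂) 1 = k * y + n * s := by simp [hu₁, hu₂]
    have hnorm : (k * δ) ^ 2 + (k * y + n * s) ^ 2 ≤ T ^ 2 := by
      rw [← h₀, ← h₁, ← Fin.sum_univ_two (fun i => (k • u₁ + n • u₂) i ^ 2),
        ← EuclideanSpace.real_norm_sq_eq]
      gcongr
    rw [h₀, h₁] at hH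
    exact ⟨(k, n), mem_latticeIndices hs hδ hT.le hH hnorm, rfl⟩
  have hfin := (latticeIndices s y δ T).finite_toSet.image L
  refine ⟨hfin.subset hsub, ?_⟩
  have hncard := (Set.ncard_le_ncard hsub hfin).trans
    ((Set.ncard_image_le (finite_toSet _)).trans_eq (Set.ncard_coe_finset _))
  calc (A.ncard : ℝ) ≤ #(latticeIndices s y δ T) := by exact_mod_cast hncard
    _ ≤ T / s + 2 * (T / δ) + π * T ^ 2 / (2 * δ * s) := card_latticeIndices_le hs hδ hT.le
    _ = _ := by simp only [δ]; field_simp; ring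

/-- The central counting estimate in the proof of Lemma 5.2: for the lattice
`ℒ` generated by `(0, s)` and `(S/s, y)` (with `0 ≤ y < s`) and the standard
half-plane `H`, the number of lattice points in `H` of norm at most `T` is at
most `πT²/(2S) + 2sT/S + T/s`. -/
theorem lattice_halfplane_count
    (s S y : ℝ) (hs : 0 < s) (hS : 0 < S) (hy0 : 0 ≤ y) (hys : y < s)
    (u₁ u₂ : EuclideanSpace ℝ (Fin 2))
    (hu₁ : u₁ = (WithLp.equiv 2 (Fin 2 → ℝ)).symm ![S / s, y])
    (hu₂ : u₂ = (WithLp.equiv 2 (Fin 2 → ℝ)).symm ![0, s])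
    (T : ℝ) (hT : 0 < T) :
    {v : EuclideanSpace ℝ (Fin 2) |
        (∃ k n : ℤ, v = k • u₁ + n • u₂) ∧
        (0 < v 1 ∨ (v 1 = 0 ∧ 0 < v 0)) ∧ ‖v‖ ≤ T}.Finite ∧
    ({v : EuclideanSpace ℝ (Fin 2) |
        (∃ k n : ℤ, v = k • u₁ + n • u₂) ∧
        (0 < v 1 ∨ (v 1 = 0 ∧ 0 < v 0)) ∧ ‖v‖ ≤ T}.ncard : ℝ)
      ≤ Real.pi * T ^ 2 / (2 * S) + 2 * s * T / S + T / s :=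
  lattice_halfplane_count_general s S y hs hS u₁ u₂ hu₁ hu₂ T hT
end

section
/- Let v₁, v₂ ∈ ℝ² be linearly independent vectors, let ℒ = ℤv₁ + ℤv₂ be the lattice they generate, and let s = min{‖v‖ : v ∈ ℒ, v ≠ 0}. Then for every T > 0 the set {v ∈ ℒ : v ≠ 0, ‖v‖ ≤ T} is finite and its cardinality is at most 14 s⁻² T². -/
open Metric MeasureTheory Set

/-- The counting assertion of Lemma 5.2: for a lattice `ℒ = ℤv₁ + ℤv₂` in the
Euclidean plane whose shortest nonzero vector has length `s`, the number of
nonzero lattice vectors of norm at most `T` is at most `14 s⁻² T²`. -/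
theorem lattice_count_le
    (v₁ v₂ : EuclideanSpace ℝ (Fin 2))
    (hind : LinearIndependent ℝ ![v₁, v₂])
    (L : Set (EuclideanSpace ℝ (Fin 2)))
    (hL : L = {v | ∃ k n : ℤ, v = k • v₁ + n • v₂})
    (s : ℝ) (hs : IsLeast {r : ℝ | ∃ v ∈ L, v ≠ 0 ∧ ‖v‖ = r} s)
    (T : ℝ) (hT : 0 < T) :
    {v : EuclideanSpace ℝ (Fin 2) | v ∈ L ∧ v ≠ 0 ∧ ‖v‖ ≤ T}.Finite ∧
    ({v : EuclideanSpace ℝ (Fin 2) | v ∈ L ∧ v ≠ 0 ∧ ‖v‖ ≤ T}.ncard : ℝ)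
      ≤ 14 * s⁻¹ ^ 2 * T ^ 2 := by
  obtain ⟨⟨v₀, hv₀L, hv₀ne, hv₀norm⟩, hlb⟩ := hs
  have hspos : 0 < s := hv₀norm ▸ norm_pos_iff.mpr hv₀ne
  set S := {v : EuclideanSpace ℝ (Fin 2) | v ∈ L ∧ v ≠ 0 ∧ ‖v‖ ≤ T} with hSdef
  -- L is closed under subtraction
  have hsub : ∀ u w, u ∈ L → w ∈ L → u - w ∈ L := by
    intro u w hu hw
    rw [hL] at hu hw ⊢
    obtain ⟨k1, n1, rfl⟩ := hu
    obtain ⟨k2, n2, rfl⟩ := hw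
    exact ⟨k1 - k2, n1 - n2, by simp [sub_smul]; abel⟩
  -- separation
  have hsep : ∀ u ∈ S, ∀ w ∈ S, u ≠ w → s ≤ dist u w := by
    intro u hu w hw hne
    have h1 : u - w ∈ L := hsub u w hu.1 hw.1
    have h2 : u - w ≠ 0 := sub_ne_zero.mpr hne
    have := hlb ⟨u - w, h1, h2, rfl⟩
    rwa [dist_eq_norm]
  -- key counting bound for finsets
  have key : ∀ F : Finset (EuclideanSpace ℝ (Fin 2)), ↑F ⊆ S →
      (F.card : ℝ) ≤ 14 * s⁻¹ ^ 2 * T ^ 2 := by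
    intro F hF
    rcases F.eq_empty_or_nonempty with rfl | ⟨w₀, hw₀⟩
    · simp; positivity
    have hsT : s ≤ T := by
      have := hF hw₀
      exact le_trans (hlb ⟨w₀, this.1, this.2.1, rfl⟩) this.2.2
    have hdisj : (↑F : Set (EuclideanSpace ℝ (Fin 2))).PairwiseDisjoint
        (fun v => ball v (s / 2)) := by
      intro u hu w hw hne
      exact ball_disjoint_ball (by
        have := hsep u (hF hu) w (hF hw) hne
        linarith)
    have hsubball : ∀ v ∈ F, ball v (s / 2) ⊆ ball (0 : EuclideanSpace ℝ (Fin 2)) (T + s / 2) := by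
      intro v hv x hx
      have hvT : ‖v‖ ≤ T := (hF hv).2.2
      simp only [mem_ball, dist_zero_right] at hx ⊢
      calc ‖x‖ ≤ dist x v + ‖v‖ := by
            simpa [dist_eq_norm] using norm_add_le (x - v) v
        _ < s / 2 + T := by linarith
        _ = T + s / 2 := by ring
    have hvol : ∑ v ∈ F, volume (ball v (s / 2))
        ≤ volume (ball (0 : EuclideanSpace ℝ (Fin 2)) (T + s / 2)) := by
      rw [← measure_biUnion_finset hdisj (fun _ _ => measurableSet_ball)]
      exact measure_mono (Set.iUnion₂_subset hsubball)
    have hd : Module.finrank ℝ (EuclideanSpace ℝ (Fin 2)) = 2 := by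
      simp [finrank_euclideanSpace]
    set c := volume (ball (0 : EuclideanSpace ℝ (Fin 2)) 1) with hc
    have hball : ∀ v : EuclideanSpace ℝ (Fin 2),
        volume (ball v (s / 2)) = ENNReal.ofReal ((s / 2) ^ 2) * c := by
      intro v
      rw [Measure.addHaar_ball volume v (by linarith : (0:ℝ) ≤ s / 2), hd]
    have hballR : volume (ball (0 : EuclideanSpace ℝ (Fin 2)) (T + s / 2))
        = ENNReal.ofReal ((T + s / 2) ^ 2) * c := by
      rw [Measure.addHaar_ball volume _ (by linarith : (0:ℝ) ≤ T + s / 2), hd]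
    rw [hballR] at hvol
    simp only [hball, Finset.sum_const, nsmul_eq_mul] at hvol
    rw [← mul_assoc] at hvol
    have hc0 : c ≠ 0 := (measure_ball_pos _ _ one_pos).ne'
    have hctop : c ≠ ⊤ := measure_ball_lt_top.ne
    have hvol2 : (F.card : ENNReal) * ENNReal.ofReal ((s / 2) ^ 2)
        ≤ ENNReal.ofReal ((T + s / 2) ^ 2) :=
      (ENNReal.mul_le_mul_iff_left hc0 hctop).mp hvol
    have hreal : (F.card : ℝ) * (s / 2) ^ 2 ≤ (T + s / 2) ^ 2 := by
      have := hvol2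
      rw [← ENNReal.ofReal_natCast F.card,
        ← ENNReal.ofReal_mul (p := (F.card : ℝ)) (Nat.cast_nonneg _)] at this
      exact (ENNReal.ofReal_le_ofReal_iff (by positivity)).mp this
    have hinv : s⁻¹ ^ 2 = (s ^ 2)⁻¹ := by rw [← inv_pow]
    rw [hinv]
    rw [show (14 : ℝ) * (s ^ 2)⁻¹ * T ^ 2 = 14 * T ^ 2 / s ^ 2 by ring,
      le_div_iff₀ (by positivity)]
    nlinarith [sq_nonneg (T - s)]
  -- finiteness
  have hfin : S.Finite := by
    by_contra hinf
    have hinf : S.Infinite := hinf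
    obtain ⟨t, htS, htfin, htcard⟩ :=
      hinf.exists_subset_ncard_eq (⌈(14 : ℝ) * s⁻¹ ^ 2 * T ^ 2⌉₊ + 1)
    have := key htfin.toFinset (by simpa using htS)
    have h1 : (14 : ℝ) * s⁻¹ ^ 2 * T ^ 2 ≤ ⌈(14 : ℝ) * s⁻¹ ^ 2 * T ^ 2⌉₊ := Nat.le_ceil _
    rw [← Set.ncard_eq_toFinset_card t htfin, htcard] at this
    push_cast at this
    linarith
  refine ⟨hfin, ?_⟩
  have := key hfin.toFinset (by simp)
  rwa [← Set.ncard_eq_toFinset_card S hfin] at this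
end

section
/- Under the standing hypotheses there exists a constant c ≥ 0 such that for every continuous compactly supported function f : ℝ² → ℝ, the function ω ↦ ∫_{ℝ²} f dν_ω is μ-integrable on ℳ and (1/μ(ℳ)) ∫_ℳ (∫_{ℝ²} f dν_ω) dμ(ω) = c ∫_{ℝ²} f(x) dx, where dx denotes Lebesgue measure on ℝ². -/
/-!
Averaging `ν_ω` against `μ` gives a measure `m` on the plane (the bind `μ.bind ν`) with
`∫ f dm = ∫ (∫ f dν_ω) dμ(ω)`. By equivariance and invariance of `μ`, `m` is
`SL(2,ℝ)`-invariant; it has no atom at the origin; and it is locally finite, because `(C)`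
bounds the mass of one ball and, following Eskin–Masur, every compact set is covered by
finitely many `SL(2,ℝ)`-preimages of that ball. Such a measure is a multiple of Lebesgue
measure: shears make the axes null, the substitution `(x, y) ↦ (y, x / y)` turns shear
invariance into translation invariance in one factor and hence a product structure
`σ ⊗ Lebesgue`, from which invariance under all translations follows, and uniqueness of Haar
measure concludes.
-/

open MeasureTheory Filter Set Matrix
open scoped ENNReal NNReal MatrixGroups

local notation "ℝ²" => EuclideanSpace ℝ (Fin 2)

noncomputable section

theorem measure_eq_zero_of_pairwise_disjoint_copies {α : Type*} [MeasurableSpace α]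
    {μ : Measure α} {A : Set α} {S : ℕ → Set α} (hS : ∀ n, MeasurableSet (S n))
    (hd : Pairwise (Function.onFun Disjoint S)) (hμS : ∀ n, μ (S n) = μ A)
    (hfin : μ (⋃ n, S n) ≠ ∞) : μ A = 0 := by
  by_contra hA
  rw [measure_iUnion hd hS, funext hμS] at hfin
  exact hfin (ENNReal.tsum_const_eq_top_of_ne_zero hA)

theorem MeasureTheory.Measure.map_bind_eq_of_measurePreserving {α β : Type*} [MeasurableSpace α]
    [MeasurableSpace β] {μ : Measure α} {κ : α → Measure β} (hκ : Measurable κ) {f : α → α}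
    (hf : MeasurePreserving f μ μ) {h : β → β} (hh : Measurable h)
    (hκf : ∀ a, κ (f a) = (κ a).map h) : (μ.bind κ).map h = μ.bind κ := by
  ext s hs
  rw [Measure.map_apply hh hs, Measure.bind_apply (hh hs) hκ.aemeasurable,
    Measure.bind_apply hs hκ.aemeasurable]
  calc ∫⁻ a, κ a (h ⁻¹' s) ∂μ = ∫⁻ a, κ (f a) s ∂μ := by simp_rw [hκf, Measure.map_apply hh hs]
    _ = ∫⁻ a, κ a s ∂μ := hf.lintegral_comp ((Measure.measurable_coe hs).comp hκ)

theorem MeasureTheory.Measure.bind_apply_lt_top_of_memLp {α β : Type*} [MeasurableSpace α]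
    [MeasurableSpace β] {μ : Measure α} [IsFiniteMeasure μ] {κ : α → Measure β}
    (hκ : Measurable κ) {s : Set β} (hs : MeasurableSet s) (hκs : ∀ a, κ a s ≠ ∞)
    {p : ℝ≥0∞} (hp : 1 ≤ p) (h : MemLp (fun a => (κ a s).toReal) p μ) : μ.bind κ s < ∞ := by
  rw [Measure.bind_apply hs hκ.aemeasurable]
  simpa only [ENNReal.ofReal_toReal (hκs _)] using (h.integrable hp).lintegral_lt_top

section KernelIntegral

variable {α β : Type*} [MeasurableSpace α] [MeasurableSpace β] {μ : Measure α}
  (κ : ProbabilityTheory.Kernel α β) {f : β → ℝ}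

theorem MeasureTheory.Measure.integrable_integral_of_integrable_bind
    (hf : Integrable f (μ.bind κ)) :
    Integrable (fun a => ∫ x, f x ∂κ a) μ := by
  rw [Measure.comp_eq_comp_const_apply] at hf
  simpa using hf.integral_comp

theorem MeasureTheory.Measure.integral_bind (hf : Integrable f (μ.bind κ)) :
    ∫ x, f x ∂μ.bind κ = ∫ a, ∫ x, f x ∂κ a ∂μ := by
  rw [Measure.comp_eq_comp_const_apply] at hf ⊢
  rw [ProbabilityTheory.Kernel.integral_comp hf]
  simp

end KernelIntegral

section DiracSum

variable {ι E : Type*} [MeasurableSpace E] (c : ι → ℝ≥0∞) (v : ι → E)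

theorem sum_smul_dirac_singleton_eq_zero [MeasurableSingletonClass E] {a : E} (hv : ∀ k, v k ≠ a) :
    Measure.sum (fun k => c k • Measure.dirac (v k)) {a} = 0 := by
  simp [Measure.sum_apply, Measure.dirac_apply', hv]

theorem isFiniteMeasureOnCompacts_sum_smul_dirac [NormedAddCommGroup E] [OpensMeasurableSpace E]
    (hc : ∀ k, c k ≠ ∞) (hv : Tendsto (fun k => ‖v k‖) cofinite atTop) :
    IsFiniteMeasureOnCompacts (Measure.sum fun k => c k • Measure.dirac (v k)) := by
  refine ⟨fun K hK => ?_⟩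
  obtain ⟨R, hKR⟩ := hK.isBounded.subset_closedBall 0
  have hfin : {k | ‖v k‖ ≤ R}.Finite := by
    simpa using eventually_cofinite.mp (hv.eventually (eventually_gt_atTop R))
  refine (measure_mono hKR).trans_lt ?_
  rw [Measure.sum_apply _ Metric.isClosed_closedBall.measurableSet,
    tsum_eq_sum (s := hfin.toFinset)]
  · refine ENNReal.sum_lt_top.mpr fun k _ => ?_
    rw [Measure.smul_apply, Measure.dirac_apply' _ Metric.isClosed_closedBall.measurableSet]
    exact ENNReal.mul_lt_top (hc k).lt_top ((indicator_le_self _ _ _).trans_lt (by simp))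
  · intro k hk
    simp_all [Measure.dirac_apply' _ Metric.isClosed_closedBall.measurableSet]

end DiracSum

section MeasurableKernel

variable {α E : Type*} [MeasurableSpace α] [MetricSpace E] [ProperSpace E]
  [MeasurableSpace E] [BorelSpace E] {ν : α → Measure E} [∀ a, IsFiniteMeasureOnCompacts (ν a)]

theorem measurable_measure_apply_of_isCompact
    (h : ∀ f : E → ℝ, Continuous f → HasCompactSupport f → Measurable fun a => ∫ x, f x ∂ν a)
    {K : Set E} (hK : IsCompact K) : Measurable fun a => ν a K := by
  set C := Metric.cthickening 1 K
  have hC : IsCompact C := hK.cthickening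
  have δ_pos : ∀ n : ℕ, (0 : ℝ) < 1 / (n + 1) := fun n => Nat.one_div_pos_of_nat
  have hsupp : ∀ n, Function.support (thickenedIndicator (δ_pos n) K) ⊆ C := fun n x hx => by
    by_contra hxC
    refine hx (thickenedIndicator_zero _ _ fun hx' => hxC ?_)
    refine Metric.thickening_subset_cthickening_of_le ?_ _ hx'
    exact Nat.one_div_le_one_div (Nat.zero_le n) |>.trans_eq (by simp)
  have hcs : ∀ n, HasCompactSupport fun x => (thickenedIndicator (δ_pos n) K x : ℝ) :=
    fun n => HasCompactSupport.intro hC fun x hx => by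
      simp only [Function.notMem_support.mp fun h => hx (hsupp n h), NNReal.coe_zero]
  refine measurable_of_tendsto_metrizable (f := fun n a =>
    ENNReal.ofReal (∫ x, (thickenedIndicator (δ_pos n) K x : ℝ) ∂ν a))
    (fun n => ENNReal.measurable_ofReal.comp (h _ (by fun_prop) (hcs n))) ?_
  refine tendsto_pi_nhds.mpr fun a => ?_
  have : IsFiniteMeasure ((ν a).restrict C) := isFiniteMeasure_restrict.mpr hC.measure_lt_top.ne
  have hlim := tendsto_lintegral_thickenedIndicator_of_isClosed ((ν a).restrict C) hK.isClosed
    δ_pos tendsto_one_div_add_atTop_nhds_zero_nat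
  rw [Measure.restrict_eq_self _ (Metric.self_subset_cthickening K)] at hlim
  convert hlim using 2 with n
  rw [setLIntegral_eq_of_support_subset, lintegral_coe_eq_integral]
  · exact Continuous.integrable_of_hasCompactSupport (by fun_prop) (hcs n)
  · exact (Function.support_comp_subset ENNReal.coe_zero _).trans (hsupp n)

theorem measurable_of_measurable_integral_hasCompactSupport
    (h : ∀ f : E → ℝ, Continuous f → HasCompactSupport f → Measurable fun a => ∫ x, f x ∂ν a) :
    Measurable ν := by
  have hrestrict : ∀ n, Measurable fun a => (ν a).restrict (compactCovering E n) := by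
    intro n
    have : ∀ a, IsFiniteMeasure ((ν a).restrict (compactCovering E n)) := fun a =>
      isFiniteMeasure_restrict.mpr (isCompact_compactCovering E n).measure_lt_top.ne
    refine .measure_of_isPiSystem ((BorelSpace.measurable_eq (α := E)).trans
      borel_eq_generateFrom_isClosed) isPiSystem_isClosed (fun F hF => ?_) ?_
    · simp_rw [Measure.restrict_apply hF.measurableSet]
      exact measurable_measure_apply_of_isCompact h ((isCompact_compactCovering E n).inter_left hF)
    · simp_rw [Measure.restrict_apply_univ]
      exact measurable_measure_apply_of_isCompact h (isCompact_compactCovering E n)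
  refine Measure.measurable_of_measurable_coe _ fun s hs => ?_
  have hsup : ∀ a, ν a s = ⨆ n, (ν a).restrict (compactCovering E n) s := fun a => by
    rw [← Measure.restrict_iUnion_apply_eq_iSup
      (monotone_nat_of_le_succ fun n => compactCovering_subset E n.le_succ).directed_le hs,
      iUnion_compactCovering, Measure.restrict_univ]
  simp_rw [hsup]
  exact .iSup fun n => Measure.measurable_coe hs |>.comp (hrestrict n)

end MeasurableKernel

section ProductDecomposition

variable (ψ : Measure (ℝ × ℝ)) [IsFiniteMeasureOnCompacts ψ]

theorem measure_prod_eq_mul_volume_of_map_add_snd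
    (h : ∀ c, ψ.map (fun z => (z.1, z.2 + c)) = ψ) {s t : Set ℝ} (hs : MeasurableSet s)
    (hsb : Bornology.IsBounded s) (ht : MeasurableSet t) :
    ψ (s ×ˢ t) = ψ (s ×ˢ Icc 0 1) * volume t := by
  set ρ := (ψ.restrict (s ×ˢ univ)).map Prod.snd
  have hρ : ∀ t, MeasurableSet t → ρ t = ψ (s ×ˢ t) := fun t ht => by
    rw [Measure.map_apply measurable_snd ht, Measure.restrict_apply (measurable_snd ht),
      ← univ_prod, prod_inter_prod, univ_inter, inter_univ]
  have : ρ.IsAddLeftInvariant := ⟨fun c => Measure.ext fun t ht => by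
    rw [Measure.map_apply (measurable_const_add c) ht, hρ _ (measurable_const_add c ht), hρ t ht]
    calc ψ (s ×ˢ ((c + ·) ⁻¹' t)) = ψ ((fun z => (z.1, z.2 + c)) ⁻¹' (s ×ˢ t)) := by
          congr 1; ext; simp [add_comm]
      _ = ψ (s ×ˢ t) := by rw [← Measure.map_apply (by fun_prop) (hs.prod ht), h c]⟩
  have : IsFiniteMeasureOnCompacts ρ := ⟨fun K hK => by
    rw [hρ K hK.measurableSet]
    exact (measure_mono (prod_mono subset_closure subset_rfl)).trans_lt
      (hsb.isCompact_closure.prod hK).measure_lt_top⟩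
  have hρeq := Measure.isAddLeftInvariant_eq_smul ρ volume
  rw [← hρ t ht, ← hρ _ measurableSet_Icc, hρeq]
  simp

theorem exists_eq_prod_volume_of_map_add_snd (h : ∀ c, ψ.map (fun z => (z.1, z.2 + c)) = ψ) :
    ∃ σ : Measure ℝ, IsFiniteMeasureOnCompacts σ ∧ ψ = σ.prod volume := by
  set σ := (ψ.restrict (univ ×ˢ Icc 0 1)).map Prod.fst
  have hσ : ∀ s, MeasurableSet s → σ s = ψ (s ×ˢ Icc 0 1) := fun s hs => by
    rw [Measure.map_apply measurable_fst hs, Measure.restrict_apply (measurable_fst hs),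
      ← prod_univ, prod_inter_prod, univ_inter, inter_univ]
  have : IsFiniteMeasureOnCompacts σ := ⟨fun K hK => by
    rw [hσ K hK.measurableSet]; exact (hK.prod isCompact_Icc).measure_lt_top⟩
  refine ⟨σ, this, (Measure.prod_eq fun s t hs ht => ?_).symm⟩
  set sn : ℕ → Set ℝ := fun n => s ∩ Metric.closedBall 0 n
  have hsn : Monotone sn := fun m n hmn =>
    inter_subset_inter_right _ (Metric.closedBall_subset_closedBall (Nat.cast_le.mpr hmn))
  have hs_eq : s = ⋃ n, sn n := by rw [← inter_iUnion, Metric.iUnion_closedBall_nat, inter_univ]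
  have hsnm : ∀ n, MeasurableSet (sn n) := fun n =>
    hs.inter Metric.isClosed_closedBall.measurableSet
  calc ψ (s ×ˢ t) = ⨆ n, ψ (sn n ×ˢ t) := by
        rw [hs_eq, iUnion_prod_const,
          Monotone.measure_iUnion fun m n hmn => prod_mono (hsn hmn) le_rfl]
    _ = ⨆ n, σ (sn n) * volume t := by
        refine iSup_congr fun n => ?_
        rw [hσ _ (hsnm n), measure_prod_eq_mul_volume_of_map_add_snd ψ h (hsnm n)
          (Metric.isBounded_closedBall.subset inter_subset_right) ht]
    _ = σ s * volume t := by rw [← ENNReal.iSup_mul, ← hsn.measure_iUnion, ← hs_eq]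

end ProductDecomposition

def linMap (a b c d : ℝ) (p : ℝ × ℝ) : ℝ × ℝ := (a * p.1 + b * p.2, c * p.1 + d * p.2)

@[fun_prop]
theorem measurable_linMap (a b c d : ℝ) : Measurable (linMap a b c d) := by
  unfold linMap; fun_prop

def IsSL2Invariant (P : Measure (ℝ × ℝ)) : Prop :=
  ∀ a b c d : ℝ, a * d - b * c = 1 → P.map (linMap a b c d) = P

namespace IsSL2Invariant

variable {P : Measure (ℝ × ℝ)}

theorem map_swap (hP : IsSL2Invariant P) : IsSL2Invariant (P.map Prod.swap) := by
  intro a b c d hdet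
  have : linMap a b c d ∘ Prod.swap = Prod.swap ∘ linMap d c b a := by
    funext p; simp [linMap, add_comm]
  rw [Measure.map_map (by fun_prop) measurable_swap, this,
    ← Measure.map_map measurable_swap (by fun_prop), hP d c b a (by linarith)]

theorem measure_axis_segment_eq_zero [IsFiniteMeasureOnCompacts P] (hP : IsSL2Invariant P)
    {R : ℝ} (hR : 0 < R) : P {p | p.2 = 0 ∧ R⁻¹ ≤ |p.1| ∧ |p.1| ≤ R} = 0 := by
  set A := {p : ℝ × ℝ | p.2 = 0 ∧ R⁻¹ ≤ |p.1| ∧ |p.1| ≤ R}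
  have hA : MeasurableSet A := by measurability
  -- the sheared copies `{(x, -x / (n + 1))}` of the segment are disjoint and bounded
  set S : ℕ → Set (ℝ × ℝ) := fun n => linMap 1 0 (n + 1 : ℝ)⁻¹ 1 ⁻¹' A
  have hS : ∀ n p, p ∈ S n ↔ p.2 = -((n + 1 : ℝ)⁻¹ * p.1) ∧ R⁻¹ ≤ |p.1| ∧ |p.1| ≤ R := by
    intro n p
    simp only [S, A, linMap, mem_preimage, mem_ofPred_eq, one_mul, zero_mul, add_zero]
    constructor <;> rintro ⟨h, hp⟩ <;> exact ⟨by linarith, hp⟩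
  refine measure_eq_zero_of_pairwise_disjoint_copies (S := S)
    (fun n => hA.preimage (by fun_prop)) (fun n m hnm => ?_) (fun n => ?_) ?_
  · refine Set.disjoint_left.mpr fun p hpn hpm => hnm ?_
    rw [hS] at hpn hpm
    have hp1 : p.1 ≠ 0 := fun h => by
      have := hpn.2.1; rw [h, abs_zero] at this; exact (inv_pos.mpr hR).not_ge this
    have : ((n : ℝ) + 1)⁻¹ = ((m : ℝ) + 1)⁻¹ :=
      mul_right_cancel₀ hp1 (by linarith [hpn.1, hpm.1])
    exact_mod_cast (add_left_inj 1).mp (inv_inj.mp this)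
  · rw [← Measure.map_apply (by fun_prop) hA, hP _ _ _ _ (by ring)]
  · refine ne_top_of_le_ne_top (isCompact_closedBall (0 : ℝ × ℝ) R).measure_lt_top.ne
      (measure_mono (iUnion_subset fun n p hp => ?_))
    rw [hS] at hp
    have h2 : |p.2| ≤ |p.1| := by
      rw [hp.1, abs_neg, abs_mul, abs_of_pos (by positivity)]
      exact mul_le_of_le_one_left (abs_nonneg _)
        (inv_le_one_of_one_le₀ (by linarith [n.cast_nonneg (α := ℝ)]))
    rw [mem_closedBall_zero_iff, Prod.norm_def, max_le_iff, Real.norm_eq_abs, Real.norm_eq_abs]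
    exact ⟨hp.2.2, h2.trans hp.2.2⟩

theorem measure_setOf_snd_eq_zero [IsFiniteMeasureOnCompacts P] (hP : IsSL2Invariant P)
    (h0 : P {0} = 0) : P {p | p.2 = 0} = 0 := by
  have hcover : {p : ℝ × ℝ | p.2 = 0} ⊆
      {0} ∪ ⋃ k : ℕ, {p | p.2 = 0 ∧ (k + 1 : ℝ)⁻¹ ≤ |p.1| ∧ |p.1| ≤ k + 1} := by
    intro p (hp : p.2 = 0)
    rcases eq_or_ne p.1 0 with h1 | h1
    · exact Or.inl (Prod.ext h1 hp)
    obtain ⟨k, hk⟩ := exists_nat_ge (max |p.1| |p.1|⁻¹)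
    rw [max_le_iff] at hk
    refine Or.inr (mem_iUnion.mpr ⟨k, hp, ?_, by linarith⟩)
    exact inv_le_of_inv_le₀ (abs_pos.mpr h1) (by linarith)
  exact measure_mono_null hcover (measure_union_null h0 (measure_iUnion_null fun k =>
    hP.measure_axis_segment_eq_zero (by positivity)))

theorem map_add_fst [IsFiniteMeasureOnCompacts P] (hP : IsSL2Invariant P) (h0 : P {0} = 0)
    (c : ℝ) : P.map (fun p => (p.1 + c, p.2)) = P := by
  have haxis := hP.measure_setOf_snd_eq_zero h0
  -- On `{y ≠ 0}`, `Ψ` turns the shears `(x, y) ↦ (x + c y, y)` into translations of the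
  -- second factor, and `Φ` inverts `Ψ`.
  set Ψ : ℝ × ℝ → ℝ × ℝ := fun p => (p.2, p.1 / p.2)
  set Φ : ℝ × ℝ → ℝ × ℝ := fun q => (q.2 * q.1, q.1)
  have hΨ : Measurable Ψ := by fun_prop
  have hΦ : Continuous Φ := by fun_prop
  have hΦΨ : Φ ∘ Ψ =ᵐ[P] id := measure_mono_null (fun p hp => by
    by_contra h2; exact hp (by simp [Ψ, Φ, div_mul_cancel₀ _ h2])) haxis
  set ψ := P.map Ψ
  have hψ : IsFiniteMeasureOnCompacts ψ := ⟨fun K hK => by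
    rw [Measure.map_apply hΨ hK.measurableSet]
    refine (measure_mono (t := {p | p.2 = 0} ∪ Φ '' K) fun p hp => ?_).trans_lt
      ((measure_union_le _ _).trans_lt ?_)
    · by_cases h2 : p.2 = 0
      · exact Or.inl h2
      · exact Or.inr ⟨Ψ p, hp, by simp [Ψ, Φ, div_mul_cancel₀ _ h2]⟩
    · rw [haxis, zero_add]; exact (hK.image hΦ).measure_lt_top⟩
  have hψ_trans : ∀ c, ψ.map (fun z => (z.1, z.2 + c)) = ψ := fun c => by
    have : (fun z => (z.1, z.2 + c)) ∘ Ψ =ᵐ[P] Ψ ∘ linMap 1 c 0 1 :=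
      measure_mono_null (fun p hp => by
        by_contra h2; exact hp (by simp [Ψ, linMap, add_div, mul_div_cancel_right₀ _ h2])) haxis
    rw [Measure.map_map (by fun_prop) hΨ, Measure.map_congr this,
      ← Measure.map_map hΨ (by fun_prop), hP 1 c 0 1 (by ring)]
  obtain ⟨σ, hσ, hψσ⟩ := exists_eq_prod_volume_of_map_add_snd ψ hψ_trans
  have hS : MeasurePreserving (fun q : ℝ × ℝ => (q.1, q.2 + c / q.1)) ψ ψ := by
    rw [hψσ]
    exact (MeasurePreserving.id σ).skew_product (by fun_prop)
      (ae_of_all _ fun v => map_add_right_eq_self volume (c / v))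
  have hψ_axis : ψ {q | q.1 = 0} = 0 := by
    rwa [Measure.map_apply hΨ (measurableSet_eq_fun measurable_fst measurable_const)]
  have hPψ : ψ.map Φ = P := by
    rw [Measure.map_map hΦ.measurable hΨ, Measure.map_congr hΦΨ, Measure.map_id]
  calc P.map (fun p => (p.1 + c, p.2)) = ψ.map ((fun p => (p.1 + c, p.2)) ∘ Φ) := by
        rw [← hPψ, Measure.map_map (by fun_prop) hΦ.measurable]
    _ = ψ.map (Φ ∘ fun q => (q.1, q.2 + c / q.1)) := Measure.map_congr <|
        measure_mono_null (fun q hq => by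
          by_contra h1; exact hq (by simp [Φ, add_mul, div_mul_cancel₀ _ h1])) hψ_axis
    _ = P := by rw [← Measure.map_map hΦ.measurable (by fun_prop), hS.map_eq, hPψ]

theorem eq_smul_volume [IsFiniteMeasureOnCompacts P] (hP : IsSL2Invariant P) (h0 : P {0} = 0) :
    ∃ c : ℝ≥0, P = c • volume := by
  have : IsFiniteMeasureOnCompacts (P.map Prod.swap) :=
    Measure.IsFiniteMeasureOnCompacts.map P (Homeomorph.prodComm ℝ ℝ)
  have hswap0 : P.map Prod.swap {0} = 0 := by
    rw [Measure.map_apply measurable_swap (measurableSet_singleton 0)]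
    convert h0 using 2
    ext p; simp [Prod.ext_iff, and_comm]
  have hvert : ∀ c, P.map (fun p => (p.1, p.2 + c)) = P := fun c => by
    calc P.map (fun p => (p.1, p.2 + c))
        = ((P.map Prod.swap).map (fun p => (p.1 + c, p.2))).map Prod.swap := by
          rw [Measure.map_map (by fun_prop) measurable_swap,
            Measure.map_map measurable_swap (by fun_prop)]
          rfl
      _ = P := by
          rw [hP.map_swap.map_add_fst hswap0 c, Measure.map_map measurable_swap measurable_swap,
            Prod.swap_swap_eq, Measure.map_id]
  have : P.IsAddLeftInvariant := ⟨fun q => by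
    calc P.map (q + ·) = (P.map (fun p => (p.1, p.2 + q.2))).map (fun p => (p.1 + q.1, p.2)) := by
          rw [Measure.map_map (by fun_prop) (by fun_prop)]
          congr 1; funext p; exact Prod.ext (add_comm _ _) (add_comm _ _)
      _ = P := by rw [hvert, hP.map_add_fst h0]⟩
  exact ⟨_, Measure.isAddLeftInvariant_eq_smul P volume⟩

end IsSL2Invariant

def planeAct (g : SL(2, ℝ)) : ℝ² →L[ℝ] ℝ² := toEuclideanCLM (n := Fin 2) (𝕜 := ℝ) g

theorem planeAct_apply (g : SL(2, ℝ)) (x : ℝ²) (i : Fin 2) :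
    planeAct g x i = g i 0 * x 0 + g i 1 * x 1 := by
  simp [planeAct, ofLp_toEuclideanCLM, mulVec, dotProduct, Fin.sum_univ_two]

theorem EuclideanSpace.norm_fin_two (x : ℝ²) : ‖x‖ = √(x 0 ^ 2 + x 1 ^ 2) := by
  simp [EuclideanSpace.norm_eq, Fin.sum_univ_two]

theorem exists_norm_planeAct_lt (x : ℝ²) {r : ℝ} (hr : 0 < r) :
    ∃ g : SL(2, ℝ), ‖planeAct g x‖ < r := by
  rcases eq_or_ne x 0 with rfl | hx
  · exact ⟨1, by simpa using hr⟩
  have hρ : 0 < x 0 ^ 2 + x 1 ^ 2 := by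
    simpa [EuclideanSpace.norm_fin_two, Real.sqrt_ne_zero'] using norm_ne_zero_iff.mpr hx
  have hs : r / 2 ≠ 0 := by positivity
  -- `g` maps `x` to `(r/2, 0)`
  let g : SL(2, ℝ) := ⟨!![r / 2 * x 0 / (x 0 ^ 2 + x 1 ^ 2), r / 2 * x 1 / (x 0 ^ 2 + x 1 ^ 2);
    -x 1 / (r / 2), x 0 / (r / 2)], by rw [det_fin_two_of]; field_simp; ring⟩
  refine ⟨g, ?_⟩
  have h0 : planeAct g x 0 = r / 2 := by
    rw [planeAct_apply]; simp [g]; field_simp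
  have h1 : planeAct g x 1 = 0 := by
    rw [planeAct_apply]; simp [g]; ring
  rw [EuclideanSpace.norm_fin_two, h0, h1, zero_pow two_ne_zero, add_zero,
    Real.sqrt_sq (by positivity)]
  linarith

theorem IsCompact.exists_finset_subset_iUnion_preimage_planeAct_ball {K : Set ℝ²}
    (hK : IsCompact K) {r : ℝ} (hr : 0 < r) :
    ∃ s : Finset SL(2, ℝ), K ⊆ ⋃ g ∈ s, planeAct g ⁻¹' Metric.ball 0 r :=
  hK.elim_finite_subcover _ (fun g => Metric.isOpen_ball.preimage (planeAct g).continuous)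
    fun x _ => mem_iUnion.mpr <| by simpa using exists_norm_planeAct_lt x hr

theorem isFiniteMeasureOnCompacts_of_map_planeAct_eq (m : Measure ℝ²)
    (hinv : ∀ g : SL(2, ℝ), m.map (planeAct g) = m) {r : ℝ} (hr : 0 < r)
    (hball : m (Metric.ball 0 r) < ∞) : IsFiniteMeasureOnCompacts m := by
  refine ⟨fun K hK => ?_⟩
  obtain ⟨s, hKs⟩ := hK.exists_finset_subset_iUnion_preimage_planeAct_ball hr
  refine (measure_mono hKs).trans_lt <| (measure_biUnion_finset_le _ _).trans_lt <|
    ENNReal.sum_lt_top.mpr fun g _ => ?_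
  rwa [← Measure.map_apply (planeAct g).continuous.measurable measurableSet_ball, hinv]

theorem eq_smul_volume_of_map_planeAct_eq (m : Measure ℝ²) [IsFiniteMeasureOnCompacts m]
    (hinv : ∀ g : SL(2, ℝ), m.map (planeAct g) = m) (h0 : m {0} = 0) :
    ∃ c : ℝ≥0, m = c • volume := by
  set e : ℝ² ≃L[ℝ] ℝ × ℝ := (EuclideanSpace.equiv (Fin 2) ℝ).trans (.finTwoArrow ℝ ℝ)
  have he : MeasurePreserving e volume volume :=
    (volume_preserving_finTwoArrow ℝ).comp (PiLp.volume_preserving_ofLp (Fin 2))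
  have : IsFiniteMeasureOnCompacts (m.map e) :=
    Measure.IsFiniteMeasureOnCompacts.map m e.toHomeomorph
  have hP0 : m.map e {0} = 0 := by
    rw [Measure.map_apply e.continuous.measurable (measurableSet_singleton 0)]
    convert h0 using 2
    ext x; simp
  have hP : IsSL2Invariant (m.map e) := by
    intro a b c d hdet
    let g : SL(2, ℝ) := ⟨!![a, b; c, d], by rw [det_fin_two_of]; exact hdet⟩
    have : linMap a b c d ∘ e = e ∘ planeAct g := by
      funext x
      simp only [Function.comp_apply, linMap]
      ext <;> simp [e, planeAct_apply] <;> rfl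
    rw [Measure.map_map (by fun_prop) e.continuous.measurable, this,
      ← Measure.map_map e.continuous.measurable (planeAct g).continuous.measurable, hinv g]
  have hmap_symm : ∀ μ : Measure ℝ², (μ.map e).map e.symm = μ := fun μ => by
    rw [Measure.map_map e.symm.continuous.measurable e.continuous.measurable]
    simp
  obtain ⟨c, hc⟩ := hP.eq_smul_volume hP0
  refine ⟨c, ?_⟩
  rw [← hmap_symm m, hc, Measure.map_smul, ← he.map_eq, hmap_symm]

end

theorem siegel_veech_mean_general
    {M : Type} [MeasurableSpace M]
    (μ : Measure M) [IsFiniteMeasure μ]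
    [MulAction (Matrix.SpecialLinearGroup (Fin 2) ℝ) M]
    (hpres : ∀ g : Matrix.SpecialLinearGroup (Fin 2) ℝ,
      MeasurePreserving (fun ω : M => g • ω) μ μ)
    (ν : M → Measure (EuclideanSpace ℝ (Fin 2)))
    (hν : ∀ ω : M, ∃ (ι : Type) (_ : Countable ι)
        (v : ι → EuclideanSpace ℝ (Fin 2)) (w : ι → ℝ),
      (∀ k, v k ≠ 0) ∧ (∀ k, 0 < w k) ∧ (∃ C : ℝ, ∀ k, w k ≤ C) ∧
      Tendsto (fun k => ‖v k‖) cofinite atTop ∧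
      ν ω = Measure.sum (fun k => ENNReal.ofReal (w k) • Measure.dirac (v k)))
    (h0 : ∀ f : EuclideanSpace ℝ (Fin 2) → ℝ, Continuous f → HasCompactSupport f →
      Measurable (fun ω : M => ∫ x, f x ∂(ν ω)))
    (hA : ∀ (g : Matrix.SpecialLinearGroup (Fin 2) ℝ) (ω : M),
      ν (g • ω) = Measure.map
        (fun x => (EuclideanSpace.equiv (Fin 2) ℝ).symm
          (Matrix.mulVec (g : Matrix (Fin 2) (Fin 2) ℝ)
            (EuclideanSpace.equiv (Fin 2) ℝ x))) (ν ω))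
    (hC : ∃ T₀ > (0 : ℝ), ∃ ε > (0 : ℝ), MemLp
      (fun ω : M => (ν ω {x | ‖x‖ ≤ T₀}).toReal) (ENNReal.ofReal (1 + ε)) μ) :
    ∃ c : ℝ, 0 ≤ c ∧
      ∀ f : EuclideanSpace ℝ (Fin 2) → ℝ, Continuous f → HasCompactSupport f →
        Integrable (fun ω : M => ∫ x, f x ∂(ν ω)) μ ∧
        (μ Set.univ).toReal⁻¹ * ∫ ω, (∫ x, f x ∂(ν ω)) ∂μ = c * ∫ x, f x := by
  obtain ⟨T₀, hT₀, ε, hε, hLp⟩ := hC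
  have hν_dirac : ∀ ω, IsFiniteMeasureOnCompacts (ν ω) ∧ ν ω {0} = 0 := fun ω => by
    obtain ⟨ι, _, v, w, hv0, -, -, hv, hνω⟩ := hν ω
    rw [hνω]
    exact ⟨isFiniteMeasureOnCompacts_sum_smul_dirac _ v (fun _ => ENNReal.ofReal_ne_top) hv,
      sum_smul_dirac_singleton_eq_zero _ v hv0⟩
  have := fun ω => (hν_dirac ω).1
  let κ : ProbabilityTheory.Kernel M ℝ² :=
    ⟨ν, measurable_of_measurable_integral_hasCompactSupport h0⟩
  set m := μ.bind κ
  -- `planeAct g` is definitionally the map in `hA`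
  have hinv : ∀ g : SL(2, ℝ), m.map (planeAct g) = m := fun g =>
    Measure.map_bind_eq_of_measurePreserving κ.measurable (hpres g)
      (planeAct g).continuous.measurable (hA g)
  rw [show {x : ℝ² | ‖x‖ ≤ T₀} = Metric.closedBall 0 T₀ by ext; simp] at hLp
  have hball : m (Metric.closedBall 0 T₀) < ∞ :=
    Measure.bind_apply_lt_top_of_memLp κ.measurable Metric.isClosed_closedBall.measurableSet
      (fun ω => (isCompact_closedBall 0 T₀).measure_lt_top.ne)
      (ENNReal.one_le_ofReal.mpr (by linarith)) hLp
  have : IsFiniteMeasureOnCompacts m := isFiniteMeasureOnCompacts_of_map_planeAct_eq m hinv hT₀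
    ((measure_mono Metric.ball_subset_closedBall).trans_lt hball)
  obtain ⟨c, hc⟩ := eq_smul_volume_of_map_planeAct_eq m hinv <| by
    rw [Measure.bind_apply (measurableSet_singleton 0) κ.aemeasurable]
    simp [κ, (hν_dirac _).2]
  refine ⟨(μ univ).toReal⁻¹ * c, by positivity, fun f hf hfc => ?_⟩
  have hfm : Integrable f m := hf.integrable_of_hasCompactSupport hfc
  refine ⟨Measure.integrable_integral_of_integrable_bind κ hfm, ?_⟩
  have hmean : ∫ ω, ∫ x, f x ∂ν ω ∂μ = c * ∫ x, f x := by
    refine (Measure.integral_bind κ hfm).symm.trans ?_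
    change ∫ x, f x ∂m = _
    rw [hc, integral_smul_nnreal_measure, NNReal.smul_def, smul_eq_mul]
  rw [hmean, mul_assoc]

/-- Theorem 6.1(a) (Veech): under the standing hypotheses on the `SL(2,ℝ)`-space
`(ℳ, μ)` and the assignment `ω ↦ ν_ω` of weighted point-mass measures on the
plane, there is a constant `c ≥ 0` such that for every continuous compactly
supported `f : ℝ² → ℝ` the function `ω ↦ ∫ f dν_ω` is `μ`-integrable and its
mean equals `c ∫ f dx`. -/
theorem siegel_veech_mean
    {M : Type} [MetricSpace M] [LocallyCompactSpace M]
    [MeasurableSpace M] [BorelSpace M]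
    (μ : Measure M) [IsFiniteMeasure μ] (hμ : μ Set.univ ≠ 0)
    [MulAction (Matrix.SpecialLinearGroup (Fin 2) ℝ) M]
    (hcont : ∀ g : Matrix.SpecialLinearGroup (Fin 2) ℝ,
      Continuous (fun ω : M => g • ω))
    (hpres : ∀ g : Matrix.SpecialLinearGroup (Fin 2) ℝ,
      MeasurePreserving (fun ω : M => g • ω) μ μ)
    (herg : ∀ A : Set M, MeasurableSet A →
      (∀ g : Matrix.SpecialLinearGroup (Fin 2) ℝ, (fun ω : M => g • ω) '' A = A) →
      μ A = 0 ∨ μ Aᶜ = 0)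
    (ν : M → Measure (EuclideanSpace ℝ (Fin 2)))
    (hν : ∀ ω : M, ∃ (ι : Type) (_ : Countable ι)
        (v : ι → EuclideanSpace ℝ (Fin 2)) (w : ι → ℝ),
      (∀ k, v k ≠ 0) ∧ (∀ k, 0 < w k) ∧ (∃ C : ℝ, ∀ k, w k ≤ C) ∧
      Tendsto (fun k => ‖v k‖) cofinite atTop ∧
      ν ω = Measure.sum (fun k => ENNReal.ofReal (w k) • Measure.dirac (v k)))
    (h0 : ∀ f : EuclideanSpace ℝ (Fin 2) → ℝ, Continuous f → HasCompactSupport f →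
      Measurable (fun ω : M => ∫ x, f x ∂(ν ω)))
    (hA : ∀ (g : Matrix.SpecialLinearGroup (Fin 2) ℝ) (ω : M),
      ν (g • ω) = Measure.map
        (fun x => (EuclideanSpace.equiv (Fin 2) ℝ).symm
          (Matrix.mulVec (g : Matrix (Fin 2) (Fin 2) ℝ)
            (EuclideanSpace.equiv (Fin 2) ℝ x))) (ν ω))
    (hB : ∀ K : Set M, IsCompact K → ∃ c > (0 : ℝ), ∀ ω ∈ K, ∀ T : ℝ, 1 < T →
      ν ω {x | ‖x‖ ≤ T} ≤ ENNReal.ofReal (c * T ^ 2))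
    (hC : ∃ T₀ > (0 : ℝ), ∃ ε > (0 : ℝ), MemLp
      (fun ω : M => (ν ω {x | ‖x‖ ≤ T₀}).toReal) (ENNReal.ofReal (1 + ε)) μ) :
    ∃ c : ℝ, 0 ≤ c ∧
      ∀ f : EuclideanSpace ℝ (Fin 2) → ℝ, Continuous f → HasCompactSupport f →
        Integrable (fun ω : M => ∫ x, f x ∂(ν ω)) μ ∧
        (μ Set.univ).toReal⁻¹ * ∫ ω, (∫ x, f x ∂(ν ω)) ∂μ = c * ∫ x, f x :=
  siegel_veech_mean_general μ hpres ν hν h0 hA hC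
end
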